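/- Let A₁, …, A_N be n×n positive definite complex matrices, let ω = (w₁, …, w_N) be a positive probability vector, and let q satisfy 0 < q ≤ 1. Then ℋ(ω; A₁, …, A_N) ⪯ Q_{-q}(ω; A₁, …, A_N) in the near-order, where ℋ(ω; A₁, …, A_N) = (Σⱼ wⱼ Aⱼ^{-1})^{-1} is the weighted harmonic mean. -/

import Mathlib

open Matrix
open scoped ComplexOrder

/-- Real power of a matrix via functional calculus on the spectrum (junk value
if the matrix is not Hermitian). -/
noncomputable def mrpow {n : ℕ} (A : Matrix (Fin n) (Fin n) ℂ) (r : ℝ) :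
    Matrix (Fin n) (Fin n) ℂ :=
  if hA : A.IsHermitian then
    (hA.eigenvectorUnitary : Matrix (Fin n) (Fin n) ℂ) *
      diagonal (fun i => ((hA.eigenvalues i ^ r : ℝ) : ℂ)) *
      (star (hA.eigenvectorUnitary : Matrix (Fin n) (Fin n) ℂ))
  else A

/-- The metric geometric mean `A # B = A^{1/2} (A^{-1/2} B A^{-1/2})^{1/2} A^{1/2}`. -/
noncomputable def sharp {n : ℕ} (A B : Matrix (Fin n) (Fin n) ℂ) :
    Matrix (Fin n) (Fin n) ℂ :=
  mrpow A (1/2) * mrpow (mrpow A (-(1/2)) * B * mrpow A (-(1/2))) (1/2) * mrpow A (1/2)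

/-- The Loewner order `A ≤ B`, i.e. `B - A` is positive semidefinite. -/
def loewnerLE {n : ℕ} (A B : Matrix (Fin n) (Fin n) ℂ) : Prop := (B - A).PosSemidef

/-- The near-order `A ⪯ B`, i.e. `A⁻¹ # B ≥ I` in the Loewner order. -/
def nearLE {n : ℕ} (A B : Matrix (Fin n) (Fin n) ℂ) : Prop := loewnerLE 1 (sharp A⁻¹ B)

/-- The quasi-arithmetic mean `Q_p(ω; A₁, …, A_N) = (Σⱼ wⱼ Aⱼ^p)^{1/p}`. -/
noncomputable def quasiArith {n N : ℕ} (w : Fin N → ℝ) (p : ℝ)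
    (A : Fin N → Matrix (Fin n) (Fin n) ℂ) : Matrix (Fin n) (Fin n) ℂ :=
  mrpow (∑ j, w j • mrpow (A j) p) (1/p)

/-
Write `S = ∑ⱼ wⱼ Aⱼ⁻¹` (the inverse of the harmonic mean) and `T = ∑ⱼ wⱼ Aⱼ^{-q}`, so that
`Q_{-q} = T^{-1/q}` and the claim is `1 ≤ S # T^{-1/q}`. Operator concavity of `x ↦ x^q` gives
`T ≤ S^q`. For `0 < X ≤ Y` and `p ≥ 1`, Furuta's inequality with `r = p` followed by Löwner–Heinz
with exponent `p / (1 + p)` gives `X^p ≤ (X^{p/2} Y^p X^{p/2})^{1/2}`, i.e. `1 ≤ X^{-p} # Y^p`;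
take `X = T`, `Y = S^q`, `p = 1/q` and use the symmetry of `#`.

Furuta's inequality is proved by Fujii's argument: for `r ≤ 1`, `Y = Y^{-r} #_t Y^p` is bounded by
`X^{-r} #_t Y^p` since `Y^{-r} ≤ X^{-r}` and `#_t` is monotone; applying this case to the
conclusion for `r` itself yields the case `2r + 1`. Monotonicity of `#_t` in its first argument
comes from the symmetry `a #_t b = b #_{1-t} a`, which rests on `w (w⋆w)^s w⋆ = (w w⋆)^{s+1}`.
-/

open scoped NNReal

namespace CFC

variable {A : Type*} [CStarAlgebra A] [PartialOrder A] [StarOrderedRing A]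

lemma rpow_unitary_conjugate (u : unitary A) {a : A} (ha : IsStrictlyPositive a) (s : ℝ) :
    ((u : A) * a * star (u : A)) ^ s = u * a ^ s * star (u : A) := by
  have hcont : Continuous (Unitary.conjStarAlgAut ℝ≥0 A u) := by
    rw [show ⇑(Unitary.conjStarAlgAut ℝ≥0 A u) = fun x => (u : A) * x * star (u : A) from
      funext fun x => Unitary.conjStarAlgAut_apply ..]
    fun_prop
  have hspec : ContinuousOn (fun x : ℝ≥0 => x ^ s) (spectrum ℝ≥0 a) :=
    NNReal.continuousOn_rpow_const (.inl fun h => spectrum.zero_notMem ℝ≥0 ha.isUnit h)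
  simpa [rpow_def] using
    (StarAlgHomClass.map_cfc (Unitary.conjStarAlgAut ℝ≥0 A u) (fun x : ℝ≥0 => x ^ s) a).symm

lemma mul_rpow_star_mul_self_mul_star {w : A} (hw : IsUnit w) (s : ℝ) :
    w * (star w * w) ^ s * star w = (w * star w) ^ (s + 1) := by
  set p := star w * w
  have hp : IsStrictlyPositive p :=
    CStarAlgebra.isStrictlyPositive_iff_eq_star_mul_self.mpr ⟨w, hw, rfl⟩
  set h := p ^ (-(1 / 2) : ℝ)
  have hsa : star h = h := rpow_nonneg.isSelfAdjoint.star_eq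
  have hhph : h * p * h = 1 := conjugate_rpow_neg_one_half p
  -- `w * h` is the unitary factor of the polar decomposition of `w`
  have hu : w * h ∈ unitary A := by
    refine Unitary.mem_iff.mpr ⟨?_, ?_⟩
    · rw [star_mul, hsa, ← hhph]
      simp only [p, mul_assoc]
    · lift w to Aˣ using hw
      have hinv : p ^ (-1 : ℝ) * star (w : A) = ↑w⁻¹ := by
        refine Units.mul_eq_one_iff_eq_inv.mp ?_
        have h1 := rpow_neg_mul_rpow 1 hp
        rw [rpow_one p] at h1
        rwa [mul_assoc]
      have hhh : h * h = p ^ (-1 : ℝ) := by rw [← rpow_add hp.isUnit]; norm_num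
      calc w * h * star (w * h) = w * (h * h * star (w : A)) := by
            rw [star_mul, hsa]; simp only [mul_assoc]
        _ = 1 := by rw [hhh, hinv, Units.mul_inv]
  have hpow : h * p ^ (s + 1) * h = p ^ s := by
    rw [← rpow_add hp.isUnit, ← rpow_add hp.isUnit]; congr 1; ring
  calc w * p ^ s * star w = (w * h) * p ^ (s + 1) * star (w * h) := by
        rw [star_mul, hsa, ← hpow]; simp only [mul_assoc]
    _ = ((w * h) * p * star (w * h)) ^ (s + 1) := (rpow_unitary_conjugate ⟨_, hu⟩ hp _).symm
    _ = (w * star w) ^ (s + 1) := by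
        rw [star_mul, hsa]
        congr 1
        calc w * h * p * (h * star w) = w * (h * p * h) * star w := by simp only [mul_assoc]
          _ = w * star w := by rw [hhph, mul_one]
lemma rpow_rpow_of_isStrictlyPositive {a : A} (ha : IsStrictlyPositive a) (x y : ℝ) :
    (a ^ x) ^ y = a ^ (x * y) := by
  rcases eq_or_ne x 0 with rfl | hx
  · simp [rpow_zero a]
  · exact rpow_rpow a x y hx

lemma rpow_mul_rpow_mul_rpow {a : A} (ha : IsStrictlyPositive a) (x y z : ℝ) :
    a ^ x * a ^ y * a ^ z = a ^ (x + y + z) := by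
  rw [rpow_add ha.isUnit, rpow_add ha.isUnit]

lemma rpow_mul_self_mul_rpow {a : A} (ha : IsStrictlyPositive a) (x z : ℝ) :
    a ^ x * a * a ^ z = a ^ (x + 1 + z) := by
  rw [← rpow_mul_rpow_mul_rpow ha, rpow_one a]

lemma rpow_conjugate_rpow_neg_conjugate {a : A} (ha : IsStrictlyPositive a) (x : ℝ) (m : A) :
    a ^ x * (a ^ (-x) * m * a ^ (-x)) * a ^ x = m := by
  calc a ^ x * (a ^ (-x) * m * a ^ (-x)) * a ^ x
      = (a ^ x * a ^ (-x)) * m * (a ^ (-x) * a ^ x) := by simp only [mul_assoc]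
    _ = m := by rw [rpow_mul_rpow_neg x ha, rpow_neg_mul_rpow x ha, one_mul, mul_one]

lemma rpow_half_mul_rpow_half {a : A} (ha : IsStrictlyPositive a) :
    a ^ (1 / 2 : ℝ) * a ^ (1 / 2 : ℝ) = a := by
  rw [← rpow_add ha.isUnit]; norm_num [rpow_one a ha.nonneg]

lemma mul_rpow_neg_half_mul_rpow_neg_half {a : A} (ha : IsStrictlyPositive a) :
    a * (a ^ (-(1 / 2) : ℝ) * a ^ (-(1 / 2) : ℝ)) = 1 := by
  nth_rw 1 [← rpow_one a ha.nonneg]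
  rw [← rpow_add ha.isUnit, ← rpow_add ha.isUnit]; norm_num [rpow_zero a ha.nonneg]

lemma isStrictlyPositive_rpow_conjugate {a b : A} (ha : IsStrictlyPositive a)
    (hb : IsStrictlyPositive b) (x : ℝ) : IsStrictlyPositive (a ^ x * b * a ^ x) :=
  IsStrictlyPositive.conjugate_of_isUnit_of_isSelfAdjoint _ _ (ha.rpow a x).isUnit
    rpow_nonneg.isSelfAdjoint hb

lemma rpow_neg_le_rpow_neg {a b : A} (ha : IsStrictlyPositive a) (hab : a ≤ b) {r : ℝ}
    (hr : r ∈ Set.Icc (0 : ℝ) 1) : b ^ (-r) ≤ a ^ (-r) := by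
  have h := CStarAlgebra.rpow_neg_one_le_rpow_neg_one (rpow_le_rpow hr hab) (ha.rpow a r)
  rwa [rpow_rpow_of_isStrictlyPositive ha, rpow_rpow_of_isStrictlyPositive (ha.of_le hab),
    mul_neg_one] at h

/-- The weighted geometric mean `a #_t b`. -/
noncomputable def geomMean (t : ℝ) (a b : A) : A :=
  a ^ (1 / 2 : ℝ) * (a ^ (-(1 / 2) : ℝ) * b * a ^ (-(1 / 2) : ℝ)) ^ t * a ^ (1 / 2 : ℝ)

lemma geomMean_rpow_left {a : A} (ha : IsStrictlyPositive a) (x t : ℝ) (b : A) :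
    geomMean t (a ^ x) b =
      a ^ (x / 2) * (a ^ (-(x / 2)) * b * a ^ (-(x / 2))) ^ t * a ^ (x / 2) := by
  simp only [geomMean, rpow_rpow_of_isStrictlyPositive ha]
  ring_nf

lemma geomMean_rpow_rpow {a : A} (ha : IsStrictlyPositive a) (x y t : ℝ) :
    geomMean t (a ^ x) (a ^ y) = a ^ ((1 - t) * x + t * y) := by
  rw [geomMean_rpow_left ha, rpow_mul_rpow_mul_rpow ha, rpow_rpow_of_isStrictlyPositive ha,
    rpow_mul_rpow_mul_rpow ha]
  ring_nf

lemma geomMean_comm {a b : A} (ha : IsStrictlyPositive a) (hb : IsStrictlyPositive b) (t : ℝ) :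
    geomMean t a b = geomMean (1 - t) b a := by
  have hsa : ∀ {c : A} (x : ℝ), star (c ^ x) = c ^ x := fun _ => rpow_nonneg.isSelfAdjoint.star_eq
  set w := b ^ (-(1 / 2) : ℝ) * a ^ (1 / 2 : ℝ)
  have hw : IsUnit w := (hb.rpow b _).isUnit.mul (ha.rpow a _).isUnit
  have hsw : star w = a ^ (1 / 2 : ℝ) * b ^ (-(1 / 2) : ℝ) := by rw [star_mul, hsa, hsa]
  have hp : IsStrictlyPositive (star w * w) :=
    CStarAlgebra.isStrictlyPositive_iff_eq_star_mul_self.mpr ⟨w, hw, rfl⟩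
  set m := a ^ (-(1 / 2) : ℝ) * b * a ^ (-(1 / 2) : ℝ)
  have hinv : (star w * w) ^ (-1 : ℝ) = m := by
    refine hp.isUnit.mul_right_cancel ?_
    have h1 := rpow_neg_mul_rpow 1 hp
    rw [rpow_one _ hp.nonneg] at h1
    rw [h1]
    calc 1 = a ^ (-(1 / 2) : ℝ) * a ^ (1 / 2 : ℝ) := (rpow_neg_mul_rpow _ ha).symm
      _ = a ^ (-(1 / 2) : ℝ) * (b * (b ^ (-(1 / 2) : ℝ) * b ^ (-(1 / 2) : ℝ))) *
          a ^ (1 / 2 : ℝ) := by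
          rw [mul_rpow_neg_half_mul_rpow_neg_half hb, mul_one]
      _ = m * (star w * w) := by
          rw [hsw]; simp only [m, w, mul_assoc]
          rw [← mul_assoc (a ^ (-(1 / 2) : ℝ)) (a ^ (1 / 2 : ℝ)), rpow_neg_mul_rpow _ ha, one_mul]
  have hww : w * star w = b ^ (-(1 / 2) : ℝ) * a * b ^ (-(1 / 2) : ℝ) := by
    calc w * star w
        = b ^ (-(1 / 2) : ℝ) * (a ^ (1 / 2 : ℝ) * a ^ (1 / 2 : ℝ)) * b ^ (-(1 / 2) : ℝ) := by
          rw [hsw]; simp only [w, mul_assoc]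
      _ = _ := by rw [rpow_half_mul_rpow_half ha]
  calc geomMean t a b
      = (b ^ (1 / 2 : ℝ) * w) * ((star w * w) ^ (-1 : ℝ)) ^ t * (star w * b ^ (1 / 2 : ℝ)) := by
        rw [hinv, hsw, mul_assoc (a ^ (1 / 2 : ℝ)), rpow_neg_mul_rpow _ hb, mul_one, ← mul_assoc,
          rpow_mul_rpow_neg _ hb, one_mul, geomMean]
    _ = b ^ (1 / 2 : ℝ) * (w * (star w * w) ^ (-t) * star w) * b ^ (1 / 2 : ℝ) := by
        rw [rpow_rpow_of_isStrictlyPositive hp, neg_one_mul]; simp only [mul_assoc]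
    _ = geomMean (1 - t) b a := by
        rw [mul_rpow_star_mul_self_mul_star hw, hww, neg_add_eq_sub, geomMean]

lemma geomMean_mono_right {a b c : A} {t : ℝ} (ht : t ∈ Set.Icc (0 : ℝ) 1) (hbc : b ≤ c) :
    geomMean t a b ≤ geomMean t a c :=
  IsSelfAdjoint.conjugate_le_conjugate
    (rpow_le_rpow ht (IsSelfAdjoint.conjugate_le_conjugate hbc rpow_nonneg.isSelfAdjoint))
    rpow_nonneg.isSelfAdjoint

lemma geomMean_mono_left {a a' b : A} (ha : IsStrictlyPositive a) (hb : IsStrictlyPositive b)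
    {t : ℝ} (ht : t ∈ Set.Icc (0 : ℝ) 1) (haa' : a ≤ a') :
    geomMean t a b ≤ geomMean t a' b := by
  rw [geomMean_comm ha hb, geomMean_comm (ha.of_le haa') hb]
  exact geomMean_mono_right ⟨by linarith [ht.2], by linarith [ht.1]⟩ haa'

theorem furuta_of_le_one {X Y : A} (hX : IsStrictlyPositive X) (hXY : X ≤ Y) {p r : ℝ}
    (hp : 1 ≤ p) (hr : r ∈ Set.Icc (0 : ℝ) 1) :
    X ^ (1 + r) ≤ (X ^ (r / 2) * Y ^ p * X ^ (r / 2)) ^ ((1 + r) / (p + r)) := by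
  have hY := hX.of_le hXY
  have hpr : 0 < p + r := by linarith [hr.1]
  set t := (1 + r) / (p + r)
  have ht : t ∈ Set.Icc (0 : ℝ) 1 := ⟨by positivity [hr.1], (div_le_one hpr).mpr (by linarith)⟩
  have hmean : Y ≤ geomMean t (X ^ (-r)) (Y ^ p) :=
    calc Y = geomMean t (Y ^ (-r)) (Y ^ p) := by
          rw [geomMean_rpow_rpow hY,
            show (1 - t) * -r + t * p = 1 by simp only [t]; field_simp; ring, rpow_one Y hY.nonneg]
      _ ≤ geomMean t (X ^ (-r)) (Y ^ p) :=
          geomMean_mono_left (hY.rpow Y _) (hY.rpow Y _) ht (rpow_neg_le_rpow_neg hX hXY hr)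
  have h := IsSelfAdjoint.conjugate_le_conjugate (hXY.trans hmean)
    (rpow_nonneg.isSelfAdjoint : IsSelfAdjoint (X ^ (r / 2)))
  rwa [geomMean_rpow_left hX, neg_div, neg_neg, rpow_conjugate_rpow_neg_conjugate hX,
    rpow_mul_self_mul_rpow hX, show r / 2 + 1 + r / 2 = 1 + r by ring] at h

/-- The case `r = 1` applied to the conclusion `X^{1+r} ≤ K^t` for `r`, where `(K^t)^{1/t} = K`. -/
theorem furuta_step {r : ℝ} (hr : 0 ≤ r)
    (ih : ∀ {X Y : A} {p : ℝ}, IsStrictlyPositive X → X ≤ Y → 1 ≤ p →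
      X ^ (1 + r) ≤ (X ^ (r / 2) * Y ^ p * X ^ (r / 2)) ^ ((1 + r) / (p + r)))
    {X Y : A} (hX : IsStrictlyPositive X) (hXY : X ≤ Y) {p : ℝ} (hp : 1 ≤ p) :
    X ^ (1 + (2 * r + 1)) ≤
      (X ^ ((2 * r + 1) / 2) * Y ^ p * X ^ ((2 * r + 1) / 2)) ^
        ((1 + (2 * r + 1)) / (p + (2 * r + 1))) := by
  set K := X ^ (r / 2) * Y ^ p * X ^ (r / 2)
  have hK : IsStrictlyPositive K :=
    isStrictlyPositive_rpow_conjugate hX ((hX.of_le hXY).rpow Y p) _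
  have h1r : 0 < 1 + r := by linarith
  have hpr : 0 < p + r := by linarith
  have h := furuta_of_le_one (hX.rpow X (1 + r)) (ih hX hXY hp) (p := (p + r) / (1 + r))
    ((one_le_div h1r).mpr (by linarith)) ⟨zero_le_one, le_rfl⟩
  rw [rpow_rpow_of_isStrictlyPositive hK, div_mul_div_cancel₀ hpr.ne', div_self h1r.ne',
    rpow_one K hK.nonneg, rpow_rpow_of_isStrictlyPositive hX, rpow_rpow_of_isStrictlyPositive hX]
    at h
  have hexp : (1 + 1 : ℝ) / ((p + r) / (1 + r) + 1) = (1 + (2 * r + 1)) / (p + (2 * r + 1)) := by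
    field_simp; ring
  have hconj : X ^ ((1 + r) * (1 / 2)) * K * X ^ ((1 + r) * (1 / 2)) =
      X ^ ((2 * r + 1) / 2) * Y ^ p * X ^ ((2 * r + 1) / 2) := by
    calc _ = (X ^ ((1 + r) * (1 / 2)) * X ^ (r / 2)) * Y ^ p *
          (X ^ (r / 2) * X ^ ((1 + r) * (1 / 2))) := by simp only [K, mul_assoc]
      _ = _ := by rw [← rpow_add hX.isUnit, ← rpow_add hX.isUnit]; ring_nf
  rwa [hexp, hconj, show (1 + r) * (1 + 1) = 1 + (2 * r + 1) by ring] at h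

theorem furuta {X Y : A} (hX : IsStrictlyPositive X) (hXY : X ≤ Y) {p r : ℝ} (hp : 1 ≤ p)
    (hr : 0 ≤ r) : X ^ (1 + r) ≤ (X ^ (r / 2) * Y ^ p * X ^ (r / 2)) ^ ((1 + r) / (p + r)) := by
  obtain ⟨n, hn⟩ := exists_nat_ge r
  induction n generalizing r X Y p with
  | zero => exact furuta_of_le_one hX hXY hp ⟨hr, by norm_num at hn; linarith⟩
  | succ n ih =>
    rcases le_or_gt r 1 with hr1 | hr1
    · exact furuta_of_le_one hX hXY hp ⟨hr, hr1⟩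
    obtain ⟨r, rfl⟩ : ∃ r₀, r = 2 * r₀ + 1 := ⟨(r - 1) / 2, by ring⟩
    refine furuta_step (by linarith) (fun hX hXY hp => ih hX hXY hp (by linarith) ?_) hX hXY hp
    push_cast at hn
    linarith

theorem one_le_geomMean_rpow_neg_rpow {X Y : A} (hX : IsStrictlyPositive X) (hXY : X ≤ Y)
    {p : ℝ} (hp : 1 ≤ p) : 1 ≤ geomMean (1 / 2) (X ^ (-p)) (Y ^ p) := by
  have hK := isStrictlyPositive_rpow_conjugate hX ((hX.of_le hXY).rpow Y p) (p / 2)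
  have h := rpow_le_rpow (p := p / (1 + p))
    ⟨by positivity, (div_le_one (by positivity)).mpr (by linarith)⟩
    (furuta hX hXY hp (r := p) (by linarith))
  rw [rpow_rpow_of_isStrictlyPositive hX, rpow_rpow_of_isStrictlyPositive hK,
    show (1 + p) * (p / (1 + p)) = p by field_simp,
    show (1 + p) / (p + p) * (p / (1 + p)) = 1 / 2 by field_simp; ring] at h
  have h2 := IsSelfAdjoint.conjugate_le_conjugate h
    (rpow_nonneg.isSelfAdjoint : IsSelfAdjoint (X ^ (-(p / 2))))
  rw [geomMean_rpow_left hX, neg_div, neg_neg]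
  rwa [rpow_mul_rpow_mul_rpow hX, show -(p / 2) + p + -(p / 2) = 0 by ring,
    rpow_zero X hX.nonneg] at h2

theorem one_le_geomMean_rpow_neg_inv_of_le_rpow {S T : A} (hS : IsStrictlyPositive S)
    (hT : IsStrictlyPositive T) {q : ℝ} (hq0 : 0 < q) (hq1 : q ≤ 1) (hTS : T ≤ S ^ q) :
    1 ≤ geomMean (1 / 2) S (T ^ (-q⁻¹)) := by
  have h := one_le_geomMean_rpow_neg_rpow hT hTS ((one_le_inv₀ hq0).mpr hq1)
  rwa [rpow_rpow_of_isStrictlyPositive hS, mul_inv_cancel₀ hq0.ne', rpow_one S hS.nonneg,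
    geomMean_comm (hT.rpow T _) hS, show (1 : ℝ) - 1 / 2 = 1 / 2 by norm_num] at h

end CFC

section Matrix

open scoped MatrixOrder Matrix.Norms.L2Operator

variable {n : ℕ}

lemma mrpow_eq_rpow {A : Matrix (Fin n) (Fin n) ℂ} (hA : A.PosSemidef) (r : ℝ) :
    mrpow A r = A ^ r := by
  rw [CFC.rpow_eq_cfc_real hA.nonneg, hA.1.cfc_eq, mrpow, dif_pos hA.1]
  rfl

lemma mrpow_neg_eq_inv_rpow {A : Matrix (Fin n) (Fin n) ℂ} (hA : A.PosDef) (r : ℝ) :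
    mrpow A (-r) = A⁻¹ ^ r := by
  rw [mrpow_eq_rpow hA.posSemidef, Matrix.nonsing_inv_eq_ringInverse,
    CFC.inverse_eq_rpow_neg_one (isStrictlyPositive_iff_posDef.mpr hA),
    CFC.rpow_rpow_of_isStrictlyPositive (isStrictlyPositive_iff_posDef.mpr hA), neg_one_mul]

lemma sharp_eq_geomMean {A B : Matrix (Fin n) (Fin n) ℂ} (hA : A.PosSemidef)
    (hB : B.PosSemidef) : sharp A B = CFC.geomMean (1 / 2) A B := by
  have hC : (A ^ (-(1 / 2) : ℝ) * B * A ^ (-(1 / 2) : ℝ)).PosSemidef :=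
    Matrix.nonneg_iff_posSemidef.mp
      (IsSelfAdjoint.conjugate_nonneg hB.nonneg CFC.rpow_nonneg.isSelfAdjoint)
  rw [sharp, mrpow_eq_rpow hA, mrpow_eq_rpow hA, mrpow_eq_rpow hC]
  rfl

end Matrix

open scoped MatrixOrder Matrix.Norms.L2Operator in
theorem harm_nearLE_quasiArith {n N : ℕ}
    (A : Fin N → Matrix (Fin n) (Fin n) ℂ) (hA : ∀ j, (A j).PosDef)
    (w : Fin N → ℝ) (hw : ∀ j, 0 < w j) (hw1 : ∑ j, w j = 1)
    (q : ℝ) (hq0 : 0 < q) (hq1 : q ≤ 1) :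
    nearLE (∑ j, w j • (A j)⁻¹)⁻¹ (quasiArith w (-q) A) := by
  have hN : (Finset.univ : Finset (Fin N)).Nonempty :=
    Finset.nonempty_of_sum_ne_zero (hw1 ▸ one_ne_zero)
  set S := ∑ j, w j • (A j)⁻¹
  set T := ∑ j, w j • (A j)⁻¹ ^ q
  have hS : S.PosDef := Matrix.posDef_sum hN fun j _ => (hA j).inv.smul (hw j)
  have hT : T.PosDef := Matrix.posDef_sum hN fun j _ =>
    (isStrictlyPositive_iff_posDef.mp
      ((isStrictlyPositive_iff_posDef.mpr (hA j).inv).rpow _ q)).smul (hw j)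
  have hjensen : T ≤ S ^ q :=
    (CFC.concaveOn_rpow ⟨hq0.le, hq1⟩).le_map_sum (fun j _ => (hw j).le) hw1
      fun j _ => (hA j).inv.posSemidef.nonneg
  have hS' := isStrictlyPositive_iff_posDef.mpr hS
  have hT' := isStrictlyPositive_iff_posDef.mpr hT
  rw [nearLE, loewnerLE, ← Matrix.le_iff, Matrix.nonsing_inv_nonsing_inv S
    ((Matrix.isUnit_iff_isUnit_det S).mp hS.isUnit), quasiArith]
  simp_rw [mrpow_neg_eq_inv_rpow (hA _)]
  rw [mrpow_eq_rpow hT.posSemidef, one_div, inv_neg,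
    sharp_eq_geomMean hS.posSemidef (hT'.rpow T _).nonneg.posSemidef]
  exact CFC.one_le_geomMean_rpow_neg_inv_of_le_rpow hS' hT' hq0 hq1 hjensen
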